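/- If m = E ⊗ F is a complex representation of h₀ ⊕ h₁ with dim E, dim F ≥ 2, then Λ²m ≅ (Λ²E ⊗ Sym²F) ⊕ (Sym²E ⊗ Λ²F) is not irreducible; hence if Λ²m is irreducible and m is faithful, every proper ideal complement is at most one-dimensional. -/
import Mathlib

/-- Wedge of two linear functionals, as an alternating 2-form. -/
noncomputable def wedge2 {M : Type*} [AddCommGroup M] [Module ℂ M] (g₁ g₂ : M →ₗ[ℂ] ℂ) :
    AlternatingMap ℂ M ℂ (Fin 2) where
  toFun v := g₁ (v 0) * g₂ (v 1) - g₂ (v 0) * g₁ (v 1)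
  map_update_add' v i x y := by
    fin_cases i <;> simp [Function.update] <;> ring
  map_update_smul' v c x y := by
    fin_cases c <;> simp [Function.update] <;> ring
  map_eq_zero_of_eq' v i j h hij := by
    fin_cases i <;> fin_cases j <;> simp_all <;> ring

@[simp] lemma wedge2_apply {M : Type*} [AddCommGroup M] [Module ℂ M] (g₁ g₂ : M →ₗ[ℂ] ℂ)
    (u v : M) : wedge2 g₁ g₂ ![u, v] = g₁ u * g₂ v - g₂ u * g₁ v := rfl

/-- Tensor product of two linear functionals, as a functional on the tensor product. -/
noncomputable def tmulDual {E F : Type*} [AddCommGroup E] [Module ℂ E]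
    [AddCommGroup F] [Module ℂ F] (α : E →ₗ[ℂ] ℂ) (β : F →ₗ[ℂ] ℂ) :
    TensorProduct ℂ E F →ₗ[ℂ] ℂ :=
  TensorProduct.lift ((LinearMap.mul ℂ ℂ).compl₁₂ α β)

@[simp] lemma tmulDual_apply {E F : Type*} [AddCommGroup E] [Module ℂ E]
    [AddCommGroup F] [Module ℂ F] (α : E →ₗ[ℂ] ℂ) (β : F →ₗ[ℂ] ℂ) (e : E) (f : F) :
    tmulDual α β (e ⊗ₜ[ℂ] f) = α e * β f := rfl

/-- If `m = E ⊗ F` is a complex representation of `h₀ ⊕ h₁` with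
`dim E, dim F ≥ 2`, then `Λ²m ≅ (Λ²E ⊗ Sym²F) ⊕ (Sym²E ⊗ Λ²F)` is not
irreducible: there is a proper nonzero subspace of `Λ²m` invariant under the
induced actions of both `h₀` and `h₁`. -/
theorem exterior_square_of_tensor_not_irreducible
    {H₀ H₁ E F : Type*}
    [LieRing H₀] [LieAlgebra ℝ H₀] [LieRing H₁] [LieAlgebra ℝ H₁]
    [AddCommGroup E] [Module ℂ E] [FiniteDimensional ℂ E]
    [AddCommGroup F] [Module ℂ F] [FiniteDimensional ℂ F]
    (hE : 2 ≤ Module.finrank ℂ E) (hF : 2 ≤ Module.finrank ℂ F)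
    (ρE : H₀ →ₗ[ℝ] (E →ₗ[ℂ] E)) (ρF : H₁ →ₗ[ℝ] (F →ₗ[ℂ] F))
    (hLieE : ∀ (a b : H₀) (v : E), ρE ⁅a, b⁆ v = ρE a (ρE b v) - ρE b (ρE a v))
    (hLieF : ∀ (a b : H₁) (v : F), ρF ⁅a, b⁆ v = ρF a (ρF b v) - ρF b (ρF a v)) :
    ∃ p : Submodule ℂ (AlternatingMap ℂ (TensorProduct ℂ E F) ℂ (Fin 2)),
      p ≠ ⊥ ∧ p ≠ ⊤ ∧
      (∀ τ ∈ p, ∀ a : H₀, ∀ σ : AlternatingMap ℂ (TensorProduct ℂ E F) ℂ (Fin 2),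
        (∀ u v : TensorProduct ℂ E F,
          σ ![u, v] = - τ ![LinearMap.rTensor F (ρE a) u, v]
            - τ ![u, LinearMap.rTensor F (ρE a) v]) → σ ∈ p) ∧
      (∀ τ ∈ p, ∀ b : H₁, ∀ σ : AlternatingMap ℂ (TensorProduct ℂ E F) ℂ (Fin 2),
        (∀ u v : TensorProduct ℂ E F,
          σ ![u, v] = - τ ![LinearMap.lTensor E (ρF b) u, v]
            - τ ![u, LinearMap.lTensor E (ρF b) v]) → σ ∈ p) := by
  classical
  -- the subspace: forms symmetric-vanishing in the `E`-slots
  set p : Submodule ℂ (AlternatingMap ℂ (TensorProduct ℂ E F) ℂ (Fin 2)) :=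
    { carrier := {τ | ∀ (e e' : E) (f f' : F),
        τ ![e ⊗ₜ f, e' ⊗ₜ f'] + τ ![e' ⊗ₜ f, e ⊗ₜ f'] = 0}
      add_mem' := by
        intro τ₁ τ₂ h₁ h₂ e e' f f'
        simp only [AlternatingMap.add_apply]
        linear_combination h₁ e e' f f' + h₂ e e' f f'
      zero_mem' := by intro e e' f f'; simp
      smul_mem' := by
        intro c τ hτ e e' f f'
        simp only [AlternatingMap.smul_apply, smul_eq_mul]
        have := hτ e e' f f'
        linear_combination c * this } with hp
  -- bases and coordinate functionals
  let bE := Module.finBasis ℂ E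
  let bF := Module.finBasis ℂ F
  let i0 : Fin (Module.finrank ℂ E) := ⟨0, by omega⟩
  let i1 : Fin (Module.finrank ℂ E) := ⟨1, by omega⟩
  let j0 : Fin (Module.finrank ℂ F) := ⟨0, by omega⟩
  let j1 : Fin (Module.finrank ℂ F) := ⟨1, by omega⟩
  let α₀ := bE.coord i0
  let α₁ := bE.coord i1
  let β₀ := bF.coord j0
  let β₁ := bF.coord j1
  have hα₀₀ : α₀ (bE i0) = 1 := by simp [α₀]
  have hα₀₁ : α₀ (bE i1) = 0 := by
    simp [α₀, Module.Basis.coord_apply, Module.Basis.repr_self, Finsupp.single_apply]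
    intro h; exact absurd h (by simp [i0, i1, Fin.ext_iff])
  have hα₁₀ : α₁ (bE i0) = 0 := by
    simp [α₁, Module.Basis.coord_apply, Module.Basis.repr_self, Finsupp.single_apply]
    intro h; exact absurd h (by simp [i0, i1, Fin.ext_iff])
  have hα₁₁ : α₁ (bE i1) = 1 := by simp [α₁]
  have hβ₀₀ : β₀ (bF j0) = 1 := by simp [β₀]
  have hβ₀₁ : β₀ (bF j1) = 0 := by
    simp [β₀, Module.Basis.coord_apply, Module.Basis.repr_self, Finsupp.single_apply]
    intro h; exact absurd h (by simp [j0, j1, Fin.ext_iff])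
  have hβ₁₀ : β₁ (bF j0) = 0 := by
    simp [β₁, Module.Basis.coord_apply, Module.Basis.repr_self, Finsupp.single_apply]
    intro h; exact absurd h (by simp [j0, j1, Fin.ext_iff])
  have hβ₁₁ : β₁ (bF j1) = 1 := by simp [β₁]
  refine ⟨p, ?_, ?_, ?_, ?_⟩
  · -- p ≠ ⊥ : the form (α₀∧α₁)⊗(β₀β₀) is in p and nonzero
    intro hbot
    have hmem : wedge2 (tmulDual α₀ β₀) (tmulDual α₁ β₀) ∈ p := by
      intro e e' f f'
      simp only [wedge2_apply, tmulDual_apply]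
      ring
    rw [hbot, Submodule.mem_bot] at hmem
    have := congrArg (fun τ : AlternatingMap ℂ (TensorProduct ℂ E F) ℂ (Fin 2) =>
      τ ![bE i0 ⊗ₜ bF j0, bE i1 ⊗ₜ bF j0]) hmem
    simp [hα₀₀, hα₀₁, hα₁₀, hα₁₁, hβ₀₀] at this
  · -- p ≠ ⊤ : the form (α₀β₀)∧(α₀β₁) is not in p
    intro htop
    have hmem : wedge2 (tmulDual α₀ β₀) (tmulDual α₀ β₁) ∈ p := htop ▸ Submodule.mem_top
    have := hmem (bE i0) (bE i0) (bF j0) (bF j1)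
    simp [hα₀₀, hβ₀₀, hβ₀₁, hβ₁₀, hβ₁₁] at this
  · -- invariance under h₀
    intro τ hτ a σ hσ e e' f f'
    have h1 := hσ (e ⊗ₜ f) (e' ⊗ₜ f')
    have h2 := hσ (e' ⊗ₜ f) (e ⊗ₜ f')
    simp only [LinearMap.rTensor_tmul] at h1 h2
    rw [h1, h2]
    linear_combination -hτ (ρE a e) e' f f' - hτ e (ρE a e') f f'
  · -- invariance under h₁
    intro τ hτ b σ hσ e e' f f'
    have h1 := hσ (e ⊗ₜ f) (e' ⊗ₜ f')
    have h2 := hσ (e' ⊗ₜ f) (e ⊗ₜ f')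
    simp only [LinearMap.lTensor_tmul] at h1 h2
    rw [h1, h2]
    linear_combination -hτ e e' (ρF b f) f' - hτ e e' f (ρF b f')
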